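/- arXiv:1312.7443 — 3 statements merged into one kernel-verified Lean document; each statement's English description precedes it below -/
import Mathlib

section
/- For the scalar control system $y'(t) = -y(t)\alpha(t)$ with $y(0)=x$, measurable controls $\alpha:[0,\infty)\to[0,1]$, target $\mathcal{T}=\{0\}$, and cost $\mathcal{J}(t,x,\alpha)=\int_0^t |y_x(s,\alpha)|\,ds$: for every $x\neq 0$, no trajectory reaches $0$ in finite time, while the asymptotic value function $\mathcal{V}(x)=\inf\{\int_0^\infty |y_x(s,\alpha)|\,ds : \liminf_{t\to\infty}|y_x(t,\alpha)|=0\}$ equals $|x|$. -/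
open MeasureTheory Filter Set

lemma base_lintegral : ∫⁻ t in Set.Ioi (0:ℝ), ENNReal.ofReal (Real.exp (-t)) = 1 := by
  have hint : IntegrableOn (fun t => Real.exp (-t)) (Set.Ioi (0:ℝ)) := by
    simpa using exp_neg_integrableOn_Ioi 0 one_pos
  rw [← ofReal_integral_eq_lintegral_ofReal hint
    (Filter.Eventually.of_forall fun t => (Real.exp_pos _).le)]
  rw [integral_exp_neg_Ioi_zero, ENNReal.ofReal_one]

/-- For the scalar system `y' = -y α`, `y(0) = x`, with measurable controls
`α : [0,∞) → [0,1]` and target `{0}`: the solution is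
`y_x(t,α) = x · exp(-∫₀ᵗ α)`. For `x ≠ 0` no trajectory reaches `0` in finite
time, while the asymptotic exit-time value function
`𝒱(x) = inf { ∫₀^∞ |y_x(t,α)| dt : liminf_{t→∞} |y_x(t,α)| = 0 }` equals `|x|`. -/
theorem stmt1 (x : ℝ) (hx : x ≠ 0) :
    (∀ α : ℝ → ℝ, Measurable α → (∀ t, α t ∈ Set.Icc (0:ℝ) 1) →
      ∀ t ≥ (0:ℝ), x * Real.exp (-(∫ s in (0:ℝ)..t, α s)) ≠ 0) ∧
    (⨅ α : {α : ℝ → ℝ // Measurable α ∧ (∀ t, α t ∈ Set.Icc (0:ℝ) 1) ∧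
        Filter.liminf (fun t => |x * Real.exp (-(∫ s in (0:ℝ)..t, α s))|)
          Filter.atTop = 0},
      ∫⁻ t in Set.Ioi (0:ℝ),
        ENNReal.ofReal (|x * Real.exp (-(∫ s in (0:ℝ)..t, α.1 s))|))
      = ENNReal.ofReal |x| := by
  constructor
  · intro α _ _ t _
    exact mul_ne_zero hx (Real.exp_ne_zero _)
  · have hL : ∫⁻ t in Set.Ioi (0:ℝ), ENNReal.ofReal (|x| * Real.exp (-t))
        = ENNReal.ofReal |x| := by
      have : ∀ t : ℝ, ENNReal.ofReal (|x| * Real.exp (-t))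
          = ENNReal.ofReal |x| * ENNReal.ofReal (Real.exp (-t)) := fun t =>
        ENNReal.ofReal_mul (abs_nonneg x)
      simp_rw [this]
      rw [lintegral_const_mul' _ _ ENNReal.ofReal_ne_top, base_lintegral, mul_one]
    apply le_antisymm
    · -- use the control α = 1
      have hone : Filter.liminf (fun t => |x * Real.exp (-(∫ s in (0:ℝ)..t, (1:ℝ)))|)
          Filter.atTop = 0 := by
        have ht : Filter.Tendsto (fun t : ℝ => |x * Real.exp (-(∫ s in (0:ℝ)..t, (1:ℝ)))|)
            Filter.atTop (nhds 0) := by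
          have : (fun t : ℝ => |x * Real.exp (-(∫ s in (0:ℝ)..t, (1:ℝ)))|)
              = fun t => |x| * Real.exp (-t) := by
            funext t
            simp [abs_mul, abs_of_pos (Real.exp_pos _)]
          rw [this]
          simpa using (Real.tendsto_exp_neg_atTop_nhds_zero.const_mul |x|)
        exact ht.liminf_eq
      refine iInf_le_of_le ⟨fun _ => 1, measurable_const, fun t => ⟨zero_le_one, le_refl 1⟩,
        hone⟩ ?_
      rw [← hL]
      refine le_of_eq (lintegral_congr fun t => ?_)
      simp [abs_mul, abs_of_pos (Real.exp_pos _)]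
    · refine le_iInf fun ⟨α, hαm, hαb, _⟩ => ?_
      rw [← hL]
      refine lintegral_mono_ae ((ae_restrict_iff' measurableSet_Ioi).2
        (Filter.Eventually.of_forall fun t ht => ?_))
      apply ENNReal.ofReal_le_ofReal
      rw [abs_mul, abs_of_pos (Real.exp_pos _)]
      refine mul_le_mul_of_nonneg_left ?_ (abs_nonneg x)
      apply Real.exp_le_exp.2
      simp only [neg_le_neg_iff]
      have ht' : (0:ℝ) ≤ t := le_of_lt ht
      have hint : IntervalIntegrable α volume 0 t := by
        refine intervalIntegrable_const (c := (1:ℝ)) |>.mono_fun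
          hαm.aestronglyMeasurable (Filter.Eventually.of_forall fun s => ?_)
        simp only [Real.norm_eq_abs, abs_one, abs_le]
        exact ⟨by linarith [(hαb s).1], (hαb s).2⟩
      calc ∫ s in (0:ℝ)..t, α s ≤ ∫ s in (0:ℝ)..t, (1:ℝ) :=
            intervalIntegral.integral_mono_on ht' hint intervalIntegrable_const
              (fun s _ => (hαb s).2)
        _ = t := by simp
end

section
/- Suppose the asymptotic exit-time value function $\mathcal{V}$ is continuous on $\partial\mathcal{T}$ and the turnpike condition (TPC) holds. Then $\mathrm{Dom}(\mathcal{V})$ is open, $\mathcal{V}$ is continuous on $\mathrm{Dom}(\mathcal{V})$, and $\lim_{x\to\bar x}\mathcal{V}(x)=+\infty$ for every $\bar x\in\partial\,\mathrm{Dom}(\mathcal{V})$. -/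
open MeasureTheory Filter Set Metric
open scoped ENNReal

noncomputable section

/-- State space `ℝⁿ`. -/
abbrev Pt (n : ℕ) := EuclideanSpace ℝ (Fin n)

/-- Control functions with values in `ℝᵐ`. -/
abbrev Ctrl (m : ℕ) := ℝ → (Fin m → ℝ)

/-- The data of an exit-time optimal control problem: a compact control set
`A ⊆ ℝᵐ`, a closed target `𝒯 ⊆ ℝⁿ` with compact boundary, dynamics `f` and a
nonnegative Lagrangian `l` (continuous, locally Lipschitz in the state
uniformly in the control, `f` with linear growth), together with the
trajectory map `(x,α) ↦ y_x(·,α)` solving `ẏ = f(y,α)`, `y(0) = x`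
(in integral form). -/
structure ExitSetting (n m : ℕ) where
  A : Set (Fin m → ℝ)
  hAcomp : IsCompact A
  hAne : A.Nonempty
  T : Set (Pt n)
  hTclosed : IsClosed T
  hTbd : IsCompact (frontier T)
  f : Pt n → (Fin m → ℝ) → Pt n
  l : Pt n → (Fin m → ℝ) → ℝ
  hlnn : ∀ x a, 0 ≤ l x a
  hfcont : Continuous fun p : Pt n × (Fin m → ℝ) => f p.1 p.2
  hlcont : Continuous fun p : Pt n × (Fin m → ℝ) => l p.1 p.2
  hgrowth : ∃ M > 0, ∀ x, ∀ a ∈ A, ‖f x a‖ ≤ M * (1 + ‖x‖)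
  hfLip : ∀ R > 0, ∃ L > 0, ∀ a ∈ A,
    LipschitzOnWith (Real.toNNReal L) (fun x => f x a) (Metric.closedBall 0 R)
  hlLip : ∀ R > 0, ∃ L > 0, ∀ a ∈ A,
    LipschitzOnWith (Real.toNNReal L) (fun x => l x a) (Metric.closedBall 0 R)
  traj : Pt n → Ctrl m → ℝ → Pt n
  htraj0 : ∀ x α, traj x α 0 = x
  htrajODE : ∀ x α t, 0 ≤ t →
    traj x α t = x + ∫ s in (0:ℝ)..t, f (traj x α s) (α s)

namespace ExitSetting

variable {n m : ℕ} (S : ExitSetting n m)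

/-- Admissible (measurable, `A`-valued) controls. -/
def Adm (α : Ctrl m) : Prop := Measurable α ∧ ∀ t, α t ∈ S.A

/-- First entry time into a set `K` (`+∞` if the trajectory never enters). -/
def exitTimeTo (K : Set (Pt n)) (x : Pt n) (α : Ctrl m) : ℝ≥0∞ :=
  ⨅ t : {t : ℝ // 0 ≤ t ∧ S.traj x α t ∈ K}, ENNReal.ofReal t.1

/-- First entry time into the target `𝒯`. -/
def exitTime (x : Pt n) (α : Ctrl m) : ℝ≥0∞ := S.exitTimeTo S.T x α

/-- Cost `∫₀^{t_x(α)} l(y_x(t,α),α(t)) dt` of a trajectory up to its entry time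
into `K`. -/
def costTo (K : Set (Pt n)) (x : Pt n) (α : Ctrl m) : ℝ≥0∞ :=
  ∫⁻ t in {t : ℝ | 0 ≤ t ∧ ENNReal.ofReal t < S.exitTimeTo K x α},
    ENNReal.ofReal (S.l (S.traj x α t) (α t))

/-- Cost up to the entry time into the target. -/
def cost (x : Pt n) (α : Ctrl m) : ℝ≥0∞ := S.costTo S.T x α

/-- Asymptotically admissible controls at `x`: the trajectory either reaches
the target in finite time or accumulates on it as `t → +∞`
(`liminf_{t → t_x(α)⁻} dist(y_x(t,α),𝒯) = 0`). -/
def AsympAdm (x : Pt n) (α : Ctrl m) : Prop :=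
  S.Adm α ∧ (S.exitTime x α < ⊤ ∨
    liminf (fun t => infDist (S.traj x α t) S.T) atTop = 0)

/-- Asymptotic exit-time value function `𝒱`. -/
def V (x : Pt n) : ℝ≥0∞ := ⨅ α ∈ {α | S.AsympAdm x α}, S.cost x α

/-- Finite-time exit value function `𝒱^f`. -/
def Vf (x : Pt n) : ℝ≥0∞ :=
  ⨅ α ∈ {α | S.Adm α ∧ S.exitTime x α < ⊤}, S.cost x α

/-- Unrestricted (minimal) value function `𝒱ᵐ`. -/
def Vm (x : Pt n) : ℝ≥0∞ := ⨅ α ∈ {α | S.Adm α}, S.cost x α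

/-- Total `ρ`-cost of a trajectory up to its entry time into the target. -/
def rhoCost (ρ : Pt n → (Fin m → ℝ) → ℝ) (x : Pt n) (α : Ctrl m) : ℝ≥0∞ :=
  ∫⁻ t in {t : ℝ | 0 ≤ t ∧ ENNReal.ofReal t < S.exitTime x α},
    ENNReal.ofReal (ρ (S.traj x α t) (α t))

/-- Penalized value function `𝒰^ρ`: infimum of the cost over asymptotically
admissible controls with finite total `ρ`-cost. -/
def Urho (ρ : Pt n → (Fin m → ℝ) → ℝ) (x : Pt n) : ℝ≥0∞ :=
  ⨅ α ∈ {α | S.AsympAdm x α ∧ S.rhoCost ρ x α < ⊤}, S.cost x α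

/-- `ε`-penalized value function `𝒱^ρ_ε`, with running cost `l + ε ρ`. -/
def Veps (ρ : Pt n → (Fin m → ℝ) → ℝ) (ε : ℝ) (x : Pt n) : ℝ≥0∞ :=
  ⨅ α ∈ {α | S.AsympAdm x α},
    (S.cost x α + ENNReal.ofReal ε * S.rhoCost ρ x α)

end ExitSetting

/-!
Everything rests on one local estimate near a point `x₀ ∉ 𝒯`: for `x, y` close to `x₀` with
`𝒱(x) ≤ K`, `𝒱(y) ≤ 𝒱(x) + η`. To see it, (TPC) gives a nearly optimal control `α` at `x`
whose trajectory enters `𝒯_δ` before a time `τ` depending only on `K`. By Grönwall, the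
trajectory of `y` under the same `α` shadows it up to time `τ`, so its running cost is at most
slightly larger and it ends up close to `𝒯`, where `𝒱` is small by continuity on `∂𝒯`. The
dynamic programming inequality `𝒱(y) ≤ ∫₀^{t₁} l + 𝒱(y(t₁))`, obtained by concatenating
controls, combines the two. Openness of `Dom 𝒱`, continuity of `𝒱` on it and the blow-up at
its boundary are then direct consequences.
-/

open Topology

theorem mul_gronwallBound_zero (L a t : ℝ) :
    L * gronwallBound 0 L a t = a * (Real.exp (L * t) - 1) := by
  rcases eq_or_ne L 0 with rfl | hL
  · simp
  · rw [gronwallBound_of_K_ne_0 hL]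
    field_simp
    ring

theorem le_mul_exp_of_le_add_mul_integral {φ : ℝ → ℝ} {τ a L : ℝ} (hL : 0 ≤ L)
    (hφ : ContinuousOn φ (Icc 0 τ))
    (h : ∀ t ∈ Icc 0 τ, φ t ≤ a + L * ∫ s in (0:ℝ)..t, φ s) :
    ∀ t ∈ Icc 0 τ, φ t ≤ a * Real.exp (L * t) := by
  intro t ht
  set F : ℝ → ℝ := fun u => ∫ s in (0:ℝ)..u, φ s
  have hFt : Icc 0 t ⊆ Icc 0 τ := Icc_subset_Icc_right ht.2
  have hF : ContinuousOn F (Icc 0 t) := by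
    have hint : IntegrableOn φ (uIcc 0 t) := by
      rw [uIcc_of_le ht.1]
      exact (hφ.mono hFt).integrableOn_compact isCompact_Icc
    simpa [uIcc_of_le ht.1] using intervalIntegral.continuousOn_primitive_interval hint
  have hF' : ∀ u ∈ Ico 0 t, HasDerivWithinAt F (φ u) (Ici u) u := by
    intro u hu
    have hu' : u ∈ Icc 0 τ := hFt (Ico_subset_Icc_self hu)
    have hnhds : Icc 0 τ ∈ 𝓝[>] u :=
      mem_nhdsWithin.mpr ⟨Iio τ, isOpen_Iio, hu.2.trans_le ht.2,
        fun s hs => ⟨hu.1.trans hs.2.le, hs.1.le⟩⟩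
    exact intervalIntegral.integral_hasDerivWithinAt_right
      ((hφ.mono (uIcc_of_le hu.1 ▸ Icc_subset_Icc_right hu'.2)).intervalIntegrable)
      ⟨_, hnhds, hφ.aestronglyMeasurable measurableSet_Icc⟩
      ((hφ u hu').mono_of_mem_nhdsWithin hnhds)
  have hbound := le_gronwallBound_of_liminf_deriv_right_le (δ := 0) (K := L) (ε := a) hF
    (fun u hu _ hr => (hF' u hu).liminf_right_slope_le hr) (by simp [F])
    (fun u hu => by linarith [h u (hFt (Ico_subset_Icc_self hu))]) t ⟨ht.1, le_rfl⟩
  calc φ t ≤ a + L * F t := h t ht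
    _ ≤ a + L * gronwallBound 0 L a t := by
        gcongr
        simpa using hbound
    _ = a * Real.exp (L * t) := by rw [mul_gronwallBound_zero]; ring

theorem exists_first_mem_of_isClosed {X : Type*} [TopologicalSpace X] {p : ℝ → X} {K : Set X}
    (hp : ContinuousOn p (Ici 0)) (hK : IsClosed K) {s : ℝ} (hs : 0 ≤ s) (hsK : p s ∈ K) :
    ∃ t ∈ Icc 0 s, p t ∈ K ∧ ∀ u ∈ Ico 0 t, p u ∉ K := by
  have hE : IsClosed (Icc 0 s ∩ p ⁻¹' K) :=
    (hp.mono Icc_subset_Ici_self).preimage_isClosed_of_isClosed isClosed_Icc hK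
  have hbdd : BddBelow (Icc 0 s ∩ p ⁻¹' K) := ⟨0, fun u hu => hu.1.1⟩
  have hmem := hE.csInf_mem ⟨s, ⟨hs, le_rfl⟩, hsK⟩ hbdd
  exact ⟨_, hmem.1, hmem.2, fun u hu huK =>
    (csInf_le hbdd ⟨⟨hu.1, hu.2.le.trans hmem.1.2⟩, huK⟩).not_gt hu.2⟩

namespace ExitSetting

variable {n m : ℕ} (S : ExitSetting n m)

theorem integrableOn_f_comp {γ : Ctrl m} (hγ : S.Adm γ) {u : ℝ → Pt n} {s : Set ℝ} {C : ℝ}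
    (hs : MeasurableSet s) (hs' : volume s ≠ ⊤) (hu : ContinuousOn u s)
    (huC : ∀ t ∈ s, ‖u t‖ ≤ C) :
    IntegrableOn (fun t => S.f (u t) (γ t)) s := by
  obtain ⟨M, hM, hMg⟩ := S.hgrowth
  refine Integrable.mono' (g := fun _ => M * (1 + C)) (integrableOn_const hs') ?_ ?_
  · exact (S.hfcont.measurable.comp_aemeasurable
      ((hu.aemeasurable hs).prodMk hγ.1.aemeasurable)).aestronglyMeasurable
  · filter_upwards [ae_restrict_mem hs] with t ht
    calc ‖S.f (u t) (γ t)‖ ≤ M * (1 + ‖u t‖) := hMg _ _ (hγ.2 t)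
      _ ≤ M * (1 + C) := by gcongr; exact huC t ht

theorem intervalIntegrable_f_comp {γ : Ctrl m} (hγ : S.Adm γ) {u : ℝ → Pt n} {τ : ℝ}
    (hτ : 0 ≤ τ) (hu : ContinuousOn u (Icc 0 τ)) :
    IntervalIntegrable (fun t => S.f (u t) (γ t)) volume 0 τ := by
  obtain ⟨C, hC⟩ := isCompact_Icc.exists_bound_of_continuousOn hu
  rw [intervalIntegrable_iff_integrableOn_Icc_of_le hτ]
  exact S.integrableOn_f_comp hγ measurableSet_Icc measure_Icc_lt_top.ne hu hC

theorem continuousOn_traj_of_intervalIntegrable {x : Pt n} {α : Ctrl m} {b : ℝ} (hb : 0 ≤ b)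
    (h : IntervalIntegrable (fun s => S.f (S.traj x α s) (α s)) volume 0 b) :
    ContinuousOn (S.traj x α) (Icc 0 b) := by
  have hprim := intervalIntegral.continuousOn_primitive_interval' h left_mem_uIcc
  rw [uIcc_of_le hb] at hprim
  exact (continuousOn_const.add hprim).congr fun t ht => S.htrajODE x α t ht.1

theorem norm_traj_sub_le_of_intervalIntegrable {x : Pt n} {α : Ctrl m} (hα : S.Adm α)
    {M b : ℝ} (hM : 0 ≤ M) (hMg : ∀ z, ∀ a ∈ S.A, ‖S.f z a‖ ≤ M * (1 + ‖z‖)) (hb : 0 ≤ b)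
    (h : IntervalIntegrable (fun s => S.f (S.traj x α s) (α s)) volume 0 b) :
    ∀ t ∈ Icc 0 b, ‖S.traj x α t - x‖ ≤ M * (1 + ‖x‖) * b * Real.exp (M * b) := by
  set φ : ℝ → ℝ := fun t => ‖S.traj x α t - x‖
  have hφ : ContinuousOn φ (Icc 0 b) :=
    ((S.continuousOn_traj_of_intervalIntegrable hb h).sub continuousOn_const).norm
  have hφ_int : ∀ t ∈ Icc 0 b, φ t ≤ M * (1 + ‖x‖) * b + M * ∫ s in (0:ℝ)..t, φ s := by
    intro t ht
    have hsub : uIcc 0 t ⊆ uIcc 0 b := by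
      rw [uIcc_of_le ht.1, uIcc_of_le hb]; exact Icc_subset_Icc_right ht.2
    have hφt : IntervalIntegrable φ volume 0 t :=
      (hφ.mono (Icc_subset_Icc_right ht.2)).intervalIntegrable_of_Icc ht.1
    have hpt : ∀ s ∈ Icc 0 t, ‖S.f (S.traj x α s) (α s)‖ ≤ M * (1 + ‖x‖) + M * φ s := by
      intro s _
      calc ‖S.f (S.traj x α s) (α s)‖ ≤ M * (1 + ‖S.traj x α s‖) := hMg _ _ (hα.2 s)
        _ ≤ M * (1 + (‖x‖ + φ s)) := by
            gcongr
            simpa [φ] using norm_le_insert' (S.traj x α s) x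
        _ = M * (1 + ‖x‖) + M * φ s := by ring
    calc φ t = ‖∫ s in (0:ℝ)..t, S.f (S.traj x α s) (α s)‖ := by
          simp [φ, S.htrajODE x α t ht.1]
      _ ≤ ∫ s in (0:ℝ)..t, ‖S.f (S.traj x α s) (α s)‖ :=
          intervalIntegral.norm_integral_le_integral_norm ht.1
      _ ≤ ∫ s in (0:ℝ)..t, (M * (1 + ‖x‖) + M * φ s) :=
          intervalIntegral.integral_mono_on ht.1 (h.mono_set hsub).norm
            (intervalIntegrable_const.add (hφt.const_mul M)) hpt
      _ = M * (1 + ‖x‖) * t + M * ∫ s in (0:ℝ)..t, φ s := by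
          rw [intervalIntegral.integral_add intervalIntegrable_const (hφt.const_mul M),
            intervalIntegral.integral_const, intervalIntegral.integral_const_mul, smul_eq_mul]
          ring
      _ ≤ M * (1 + ‖x‖) * b + M * ∫ s in (0:ℝ)..t, φ s := by gcongr; exact ht.2
  intro t ht
  calc φ t ≤ M * (1 + ‖x‖) * b * Real.exp (M * t) :=
        le_mul_exp_of_le_add_mul_integral hM hφ hφ_int t ht
    _ ≤ M * (1 + ‖x‖) * b * Real.exp (M * b) := by gcongr; exact ht.2

theorem intervalIntegrable_f_traj {x : Pt n} {α : Ctrl m} (hα : S.Adm α) {T₀ : ℝ}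
    (hT₀ : 0 ≤ T₀) : IntervalIntegrable (fun s => S.f (S.traj x α s) (α s)) volume 0 T₀ := by
  obtain ⟨M, hM, hMg⟩ := S.hgrowth
  set g : ℝ → Pt n := fun s => S.f (S.traj x α s) (α s)
  by_contra hbad
  set I : Set ℝ := {t ∈ Icc 0 T₀ | IntervalIntegrable g volume 0 t}
  have hI0 : (0:ℝ) ∈ I := ⟨left_mem_Icc.2 hT₀, IntervalIntegrable.refl⟩
  have hIbdd : BddAbove I := ⟨T₀, fun t ht => ht.1.2⟩
  set c := sSup I
  have hc0 : 0 ≤ c := le_csSup hIbdd hI0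
  have hcT : c ≤ T₀ := csSup_le ⟨0, hI0⟩ fun t ht => ht.1.2
  have hbefore : ∀ b ∈ Ico 0 c, IntervalIntegrable g volume 0 b := by
    intro b hb
    obtain ⟨t, ht, hbt⟩ := exists_lt_of_lt_csSup ⟨0, hI0⟩ hb.2
    refine ht.2.mono_set ?_
    rw [uIcc_of_le hb.1, uIcc_of_le ht.1.1]
    exact Icc_subset_Icc_right hbt.le
  -- beyond `c` the integral in the trajectory equation takes its junk value `0`
  have hafter : ∀ t ∈ Ioc c T₀, S.traj x α t = x := by
    intro t ht
    have hnot : ¬ IntervalIntegrable g volume 0 t := fun h =>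
      (le_csSup hIbdd ⟨⟨hc0.trans ht.1.le, ht.2⟩, h⟩).not_gt ht.1
    have h := S.htrajODE x α t (hc0.trans ht.1.le)
    rwa [intervalIntegral.integral_undef (f := g) hnot, add_zero] at h
  have hcont : ContinuousOn (S.traj x α) (Ico 0 c) := by
    intro t ht
    obtain ⟨b, htb, hbc⟩ := exists_between ht.2
    refine ((S.continuousOn_traj_of_intervalIntegrable (ht.1.trans htb.le)
      (hbefore b ⟨ht.1.trans htb.le, hbc⟩)) t ⟨ht.1, htb.le⟩).mono_of_mem_nhdsWithin ?_
    exact mem_nhdsWithin.mpr ⟨Iio b, isOpen_Iio, htb, fun s hs => ⟨hs.2.1, hs.1.le⟩⟩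
  have hbound :
      ∀ t ∈ Ico 0 c, ‖S.traj x α t‖ ≤ ‖x‖ + M * (1 + ‖x‖) * T₀ * Real.exp (M * T₀) := by
    intro t ht
    have h := S.norm_traj_sub_le_of_intervalIntegrable hα hM.le hMg ht.1 (hbefore t ht) t
      ⟨ht.1, le_rfl⟩
    have htT : t ≤ T₀ := ht.2.le.trans hcT
    calc ‖S.traj x α t‖ ≤ ‖x‖ + ‖S.traj x α t - x‖ := norm_le_insert' _ _
      _ ≤ ‖x‖ + M * (1 + ‖x‖) * t * Real.exp (M * t) := by gcongr
      _ ≤ ‖x‖ + M * (1 + ‖x‖) * T₀ * Real.exp (M * T₀) := by gcongr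
  have hIco : IntegrableOn g (Ico 0 c) :=
    S.integrableOn_f_comp hα measurableSet_Ico measure_Ico_lt_top.ne hcont hbound
  have hIoc : IntegrableOn g (Ioc c T₀) :=
    S.integrableOn_f_comp (C := ‖x‖) hα measurableSet_Ioc measure_Ioc_lt_top.ne
      (continuousOn_const.congr hafter) fun t ht => by rw [hafter t ht]
  exact hbad (((intervalIntegrable_iff_integrableOn_Ico_of_le hc0).2 hIco).trans
    ((intervalIntegrable_iff_integrableOn_Ioc_of_le hcT).2 hIoc))

theorem continuousOn_traj {α : Ctrl m} (hα : S.Adm α) (x : Pt n) :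
    ContinuousOn (S.traj x α) (Ici 0) := by
  intro t ht
  have ht1 : (0:ℝ) ≤ t + 1 := by linarith [mem_Ici.1 ht]
  refine ((S.continuousOn_traj_of_intervalIntegrable ht1 (S.intervalIntegrable_f_traj hα ht1))
    t ⟨ht, by linarith⟩).mono_of_mem_nhdsWithin ?_
  exact mem_nhdsWithin.mpr ⟨Iio (t + 1), isOpen_Iio, by simp, fun s hs => ⟨hs.2, hs.1.le⟩⟩

theorem norm_traj_le {α : Ctrl m} (hα : S.Adm α) {x : Pt n} {M τ : ℝ} (hM : 0 ≤ M)
    (hMg : ∀ z, ∀ a ∈ S.A, ‖S.f z a‖ ≤ M * (1 + ‖z‖)) (hτ : 0 ≤ τ) :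
    ∀ t ∈ Icc 0 τ, ‖S.traj x α t‖ ≤ ‖x‖ + M * (1 + ‖x‖) * τ * Real.exp (M * τ) := by
  intro t ht
  calc ‖S.traj x α t‖ ≤ ‖x‖ + ‖S.traj x α t - x‖ := norm_le_insert' _ _
    _ ≤ _ := by
        gcongr
        exact S.norm_traj_sub_le_of_intervalIntegrable hα hM hMg hτ
          (S.intervalIntegrable_f_traj hα hτ) t ht

theorem norm_sub_le_of_integral_eq {γ : Ctrl m} (hγ : S.Adm γ) {u w : ℝ → Pt n} {τ R L : ℝ}
    (hL : 0 ≤ L)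
    (hLip : ∀ a ∈ S.A, LipschitzOnWith (Real.toNNReal L) (fun x => S.f x a) (closedBall 0 R))
    (hu : ContinuousOn u (Icc 0 τ)) (hw : ContinuousOn w (Icc 0 τ))
    (huR : ∀ t ∈ Icc 0 τ, u t ∈ closedBall 0 R) (hwR : ∀ t ∈ Icc 0 τ, w t ∈ closedBall 0 R)
    (hu_eq : ∀ t ∈ Icc 0 τ, u t = u 0 + ∫ s in (0:ℝ)..t, S.f (u s) (γ s))
    (hw_eq : ∀ t ∈ Icc 0 τ, w t = w 0 + ∫ s in (0:ℝ)..t, S.f (w s) (γ s)) :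
    ∀ t ∈ Icc 0 τ, ‖u t - w t‖ ≤ ‖u 0 - w 0‖ * Real.exp (L * t) := by
  set φ : ℝ → ℝ := fun t => ‖u t - w t‖
  have hφ : ContinuousOn φ (Icc 0 τ) := (hu.sub hw).norm
  refine le_mul_exp_of_le_add_mul_integral hL hφ fun t ht => ?_
  have hsub : Icc 0 t ⊆ Icc 0 τ := Icc_subset_Icc_right ht.2
  have hui := S.intervalIntegrable_f_comp hγ ht.1 (hu.mono hsub)
  have hwi := S.intervalIntegrable_f_comp hγ ht.1 (hw.mono hsub)
  have hpt : ∀ s ∈ Icc 0 t, ‖S.f (u s) (γ s) - S.f (w s) (γ s)‖ ≤ L * φ s := by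
    intro s hs
    simpa [φ, ← dist_eq_norm, Real.coe_toNNReal L hL] using
      (hLip (γ s) (hγ.2 s)).dist_le_mul _ (huR s (hsub hs)) _ (hwR s (hsub hs))
  calc φ t = ‖(u 0 - w 0) + ∫ s in (0:ℝ)..t, (S.f (u s) (γ s) - S.f (w s) (γ s))‖ := by
        simp only [φ]
        rw [intervalIntegral.integral_sub hui hwi, hu_eq t ht, hw_eq t ht]
        abel_nf
    _ ≤ ‖u 0 - w 0‖ + ∫ s in (0:ℝ)..t, ‖S.f (u s) (γ s) - S.f (w s) (γ s)‖ :=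
        (norm_add_le _ _).trans
          (by gcongr; exact intervalIntegral.norm_integral_le_integral_norm ht.1)
    _ ≤ ‖u 0 - w 0‖ + ∫ s in (0:ℝ)..t, L * φ s := by
        gcongr
        exact intervalIntegral.integral_mono_on ht.1 (hui.sub hwi).norm
          (((hφ.mono hsub).intervalIntegrable_of_Icc ht.1).const_mul L) hpt
    _ = ‖u 0 - w 0‖ + L * ∫ s in (0:ℝ)..t, φ s := by rw [intervalIntegral.integral_const_mul]

theorem traj_eq_of_integral_eq {γ : Ctrl m} (hγ : S.Adm γ) {y : Pt n} {w : ℝ → Pt n} {τ : ℝ}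
    (hw : ContinuousOn w (Icc 0 τ))
    (hw_eq : ∀ t ∈ Icc 0 τ, w t = y + ∫ s in (0:ℝ)..t, S.f (w s) (γ s)) :
    ∀ t ∈ Icc 0 τ, S.traj y γ t = w t := by
  intro t ht
  have hu : ContinuousOn (S.traj y γ) (Icc 0 τ) :=
    (S.continuousOn_traj hγ y).mono fun _ hs => hs.1
  obtain ⟨R, hR, hRsub⟩ := ((isCompact_Icc.image_of_continuousOn hu).isBounded.union
    (isCompact_Icc.image_of_continuousOn hw).isBounded).subset_closedBall_lt 0 0
  obtain ⟨L, hL, hLip⟩ := S.hfLip R hR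
  have hw0 : w 0 = y := by simpa using hw_eq 0 (left_mem_Icc.2 (ht.1.trans ht.2))
  have h := S.norm_sub_le_of_integral_eq hγ hL.le hLip hu hw
    (fun s hs => hRsub (Or.inl (mem_image_of_mem _ hs)))
    (fun s hs => hRsub (Or.inr (mem_image_of_mem _ hs)))
    (fun s hs => by rw [S.htraj0]; exact S.htrajODE y γ s hs.1) (hw0 ▸ hw_eq) t ht
  rw [S.htraj0, hw0, sub_self, norm_zero, zero_mul] at h
  exact sub_eq_zero.1 (norm_le_zero_iff.1 h)

theorem traj_congr {γ γ' : Ctrl m} (hγ : S.Adm γ) (hγ' : S.Adm γ') {τ : ℝ}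
    (h : ∀ s ∈ Ico 0 τ, γ s = γ' s) (y : Pt n) :
    ∀ t ∈ Icc 0 τ, S.traj y γ t = S.traj y γ' t := by
  refine S.traj_eq_of_integral_eq hγ ((S.continuousOn_traj hγ' y).mono fun _ hs => hs.1)
    fun t ht => ?_
  rw [S.htrajODE y γ' t ht.1]
  congr 1
  refine intervalIntegral.integral_congr_ae ?_
  filter_upwards [volume.ae_ne τ] with s hsτ hs
  rw [uIoc_of_le ht.1] at hs
  rw [h s ⟨hs.1.le, lt_of_le_of_ne (hs.2.trans ht.2) hsτ⟩]

theorem adm_shift {γ : Ctrl m} (hγ : S.Adm γ) (t₁ : ℝ) : S.Adm fun r => γ (t₁ + r) :=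
  ⟨hγ.1.comp (measurable_const_add t₁), fun _ => hγ.2 _⟩

theorem traj_add {γ : Ctrl m} (hγ : S.Adm γ) (y : Pt n) {t₁ s : ℝ} (ht₁ : 0 ≤ t₁)
    (hs : 0 ≤ s) :
    S.traj y γ (t₁ + s) = S.traj (S.traj y γ t₁) (fun r => γ (t₁ + r)) s := by
  refine (S.traj_eq_of_integral_eq (S.adm_shift hγ t₁) (w := fun r => S.traj y γ (t₁ + r))
    ?_ (fun r hr => ?_) s ⟨hs, le_rfl⟩).symm
  · exact (S.continuousOn_traj hγ y).comp (continuousOn_const.add continuousOn_id)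
      fun r hr => mem_Ici.2 (add_nonneg ht₁ hr.1)
  · have hint (b : ℝ) (hb : 0 ≤ b) := S.intervalIntegrable_f_traj (x := y) hγ hb
    rw [S.htrajODE y γ _ (add_nonneg ht₁ hr.1), S.htrajODE y γ t₁ ht₁, add_assoc,
      ← intervalIntegral.integral_add_adjacent_intervals (hint t₁ ht₁)
        ((hint t₁ ht₁).symm.trans (hint _ (add_nonneg ht₁ hr.1))),
      intervalIntegral.integral_comp_add_left (fun s => S.f (S.traj y γ s) (γ s)), add_zero]

def concatCtrl (α : Ctrl m) (t₁ : ℝ) (β : Ctrl m) : Ctrl m :=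
  fun t => if t < t₁ then α t else β (t - t₁)

variable {α β : Ctrl m}

theorem adm_concat (hα : S.Adm α) (hβ : S.Adm β) (t₁ : ℝ) : S.Adm (concatCtrl α t₁ β) :=
  ⟨Measurable.ite measurableSet_Iio hα.1 (hβ.1.comp (measurable_sub_const t₁)),
    fun t => by unfold concatCtrl; split_ifs; exacts [hα.2 t, hβ.2 _]⟩

theorem traj_concat_of_le (hα : S.Adm α) (hβ : S.Adm β) (y : Pt n) {t₁ t : ℝ}
    (ht : t ∈ Icc 0 t₁) : S.traj y (concatCtrl α t₁ β) t = S.traj y α t :=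
  S.traj_congr (S.adm_concat hα hβ t₁) hα (fun _ hs => if_pos hs.2) y t ht

theorem traj_concat_add (hα : S.Adm α) (hβ : S.Adm β) (y : Pt n) {t₁ s : ℝ} (ht₁ : 0 ≤ t₁)
    (hs : 0 ≤ s) : S.traj y (concatCtrl α t₁ β) (t₁ + s) = S.traj (S.traj y α t₁) β s := by
  rw [S.traj_add (S.adm_concat hα hβ t₁) y ht₁ hs, S.traj_concat_of_le hα hβ y ⟨ht₁, le_rfl⟩]
  exact S.traj_congr (S.adm_shift (S.adm_concat hα hβ t₁) t₁) hβ
    (fun r hr => by simp [concatCtrl, hr.1]) _ s ⟨hs, le_rfl⟩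

theorem exitTime_le {x : Pt n} {s : ℝ} (hs : 0 ≤ s) (hT : S.traj x α s ∈ S.T) :
    S.exitTime x α ≤ ENNReal.ofReal s :=
  iInf_le (fun t : {t : ℝ // 0 ≤ t ∧ S.traj x α t ∈ S.T} => ENNReal.ofReal t.1) ⟨s, hs, hT⟩

theorem exitTime_concat_le (hα : S.Adm α) (hβ : S.Adm β) (y : Pt n) {t₁ : ℝ}
    (ht₁ : 0 ≤ t₁) :
    S.exitTime y (concatCtrl α t₁ β) ≤ ENNReal.ofReal t₁ + S.exitTime (S.traj y α t₁) β := by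
  rw [← tsub_le_iff_left]
  refine le_iInf fun ⟨s, hs, hT⟩ => ?_
  rw [tsub_le_iff_left, ← ENNReal.ofReal_add ht₁ hs]
  exact S.exitTime_le (add_nonneg ht₁ hs) (by rwa [S.traj_concat_add hα hβ y ht₁ hs])

theorem asympAdm_concat (hα : S.Adm α) (y : Pt n) {t₁ : ℝ} (ht₁ : 0 ≤ t₁)
    (hβ : S.AsympAdm (S.traj y α t₁) β) : S.AsympAdm y (concatCtrl α t₁ β) := by
  refine ⟨S.adm_concat hα hβ.1 t₁, hβ.2.imp (fun hfin => ?_) (fun hlim => ?_)⟩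
  · exact (S.exitTime_concat_le hα hβ.1 y ht₁).trans_lt
      (ENNReal.add_lt_top.2 ⟨ENNReal.ofReal_lt_top, hfin⟩)
  · have hev : (fun t => infDist (S.traj y (concatCtrl α t₁ β) t) S.T) =ᶠ[atTop]
        (fun s => infDist (S.traj (S.traj y α t₁) β s) S.T) ∘ fun t => t - t₁ := by
      filter_upwards [eventually_ge_atTop t₁] with t ht
      simp only [Function.comp_apply]
      rw [← S.traj_concat_add hα hβ.1 y ht₁ (sub_nonneg.2 ht), add_sub_cancel]
    rw [liminf_congr hev, liminf_comp, map_sub_atTop_eq]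
    exact hlim

theorem measurableSet_nonneg_ofReal_lt (e : ℝ≥0∞) :
    MeasurableSet {t : ℝ | 0 ≤ t ∧ ENNReal.ofReal t < e} :=
  measurableSet_Ici.inter (measurableSet_lt ENNReal.measurable_ofReal measurable_const)

theorem cost_concat_le (hα : S.Adm α) (hβ : S.Adm β) (y : Pt n) {t₁ : ℝ}
    (ht₁ : 0 ≤ t₁) :
    S.cost y (concatCtrl α t₁ β)
      ≤ (∫⁻ t in Ico 0 t₁, ENNReal.ofReal (S.l (S.traj y α t) (α t)))
        + S.cost (S.traj y α t₁) β := by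
  set γ := concatCtrl α t₁ β
  set z := S.traj y α t₁
  set E' := {s : ℝ | 0 ≤ s ∧ ENNReal.ofReal s < S.exitTime z β}
  set P : ℝ → ℝ≥0∞ := fun t => ENNReal.ofReal (S.l (S.traj y γ t) (γ t))
  have hsplit : {t : ℝ | 0 ≤ t ∧ ENNReal.ofReal t < S.exitTime y γ}
      ⊆ Ico 0 t₁ ∪ (t₁ + ·) '' E' := by
    rintro t ⟨ht, hte⟩
    rcases lt_or_ge t t₁ with hlt | hge
    · exact Or.inl ⟨ht, hlt⟩
    refine Or.inr ⟨t - t₁, ⟨sub_nonneg.2 hge, ?_⟩, add_sub_cancel _ _⟩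
    rw [← ENNReal.add_lt_add_iff_left ENNReal.ofReal_ne_top, ← ENNReal.ofReal_add ht₁
      (sub_nonneg.2 hge), add_sub_cancel]
    exact hte.trans_le (S.exitTime_concat_le hα hβ y ht₁)
  have hfirst : ∫⁻ t in Ico 0 t₁, P t
      = ∫⁻ t in Ico 0 t₁, ENNReal.ofReal (S.l (S.traj y α t) (α t)) :=
    setLIntegral_congr_fun measurableSet_Ico fun t ht => by
      simp only [P, γ, S.traj_concat_of_le hα hβ y (Ico_subset_Icc_self ht), concatCtrl,
        if_pos ht.2]
  have hsecond : ∫⁻ t in (t₁ + ·) '' E', P t = S.cost z β := by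
    rw [← (measurePreserving_add_left volume t₁).setLIntegral_comp_emb
      (MeasurableEquiv.addLeft t₁).measurableEmbedding]
    refine setLIntegral_congr_fun (measurableSet_nonneg_ofReal_lt _) fun s hs => ?_
    simp only [P, γ, z, S.traj_concat_add hα hβ y ht₁ hs.1, concatCtrl, add_sub_cancel_left,
      add_lt_iff_neg_left, not_lt.2 hs.1, if_false]
  calc S.cost y γ ≤ ∫⁻ t in Ico 0 t₁ ∪ (t₁ + ·) '' E', P t := lintegral_mono_set hsplit
    _ ≤ (∫⁻ t in Ico 0 t₁, P t) + ∫⁻ t in (t₁ + ·) '' E', P t := lintegral_union_le _ _ _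
    _ = _ := by rw [hfirst, hsecond]

theorem V_le_cost {x : Pt n} (h : S.AsympAdm x α) : S.V x ≤ S.cost x α :=
  iInf₂_le α h

theorem V_le_lintegral_add_V (hα : S.Adm α) (y : Pt n) {t₁ : ℝ} (ht₁ : 0 ≤ t₁) :
    S.V y ≤ (∫⁻ t in Ico 0 t₁, ENNReal.ofReal (S.l (S.traj y α t) (α t)))
      + S.V (S.traj y α t₁) :=
  calc S.V y
      ≤ ⨅ β ∈ {β | S.AsympAdm (S.traj y α t₁) β},
          (∫⁻ t in Ico 0 t₁, ENNReal.ofReal (S.l (S.traj y α t) (α t)))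
            + S.cost (S.traj y α t₁) β :=
        le_iInf₂ fun _ hβ => (S.V_le_cost (S.asympAdm_concat hα y ht₁ hβ)).trans
          (S.cost_concat_le hα hβ.1 y ht₁)
    _ = _ := (ENNReal.add_iInf₂ _).symm

theorem V_eq_zero_of_mem {z : Pt n} (hz : z ∈ S.T) : S.V z = 0 := by
  obtain ⟨a, ha⟩ := S.hAne
  have hexit : S.exitTime z (fun _ => a) = 0 :=
    nonpos_iff_eq_zero.1 (by simpa using S.exitTime_le le_rfl ((S.htraj0 z _).symm ▸ hz))
  refine nonpos_iff_eq_zero.1 ((S.V_le_cost ⟨⟨measurable_const, fun _ => ha⟩,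
    Or.inl (hexit ▸ ENNReal.zero_lt_top)⟩).trans_eq ?_)
  change ∫⁻ t in {t : ℝ | 0 ≤ t ∧ ENNReal.ofReal t < S.exitTime z _}, _ = 0
  simp [hexit]

theorem V_le_cost_add_of_shadow (hα : S.Adm α) {x y : Pt n} {t₁ R Ll ε : ℝ} (hLl : 0 ≤ Ll)
    (ht₁ : 0 ≤ t₁) (hexit : ENNReal.ofReal t₁ ≤ S.exitTime x α)
    (hLip : ∀ a ∈ S.A, LipschitzOnWith (Real.toNNReal Ll) (fun x => S.l x a) (closedBall 0 R))
    (hxR : ∀ t ∈ Ico 0 t₁, S.traj x α t ∈ closedBall 0 R)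
    (hyR : ∀ t ∈ Ico 0 t₁, S.traj y α t ∈ closedBall 0 R)
    (hclose : ∀ t ∈ Ico 0 t₁, dist (S.traj y α t) (S.traj x α t) ≤ ε) :
    S.V y ≤ S.cost x α + ENNReal.ofReal (Ll * ε * t₁) + S.V (S.traj y α t₁) := by
  have hpt : ∀ t ∈ Ico 0 t₁, ENNReal.ofReal (S.l (S.traj y α t) (α t))
      ≤ ENNReal.ofReal (S.l (S.traj x α t) (α t)) + ENNReal.ofReal (Ll * ε) := by
    intro t ht
    have hd := (hLip (α t) (hα.2 t)).dist_le_mul _ (hyR t ht) _ (hxR t ht)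
    rw [Real.coe_toNNReal Ll hLl, Real.dist_eq] at hd
    refine (ENNReal.ofReal_le_ofReal ?_).trans ENNReal.ofReal_add_le
    nlinarith [le_abs_self (S.l (S.traj y α t) (α t) - S.l (S.traj x α t) (α t)), hclose t ht]
  have hbefore : Ico 0 t₁ ⊆ {t : ℝ | 0 ≤ t ∧ ENNReal.ofReal t < S.exitTime x α} :=
    fun t ht => ⟨ht.1, ((ENNReal.ofReal_lt_ofReal_iff_of_nonneg ht.1).2 ht.2).trans_le hexit⟩
  calc S.V y
      ≤ (∫⁻ t in Ico 0 t₁, ENNReal.ofReal (S.l (S.traj y α t) (α t))) + S.V (S.traj y α t₁) :=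
        S.V_le_lintegral_add_V hα y ht₁
    _ ≤ (∫⁻ t in Ico 0 t₁, (ENNReal.ofReal (S.l (S.traj x α t) (α t))
          + ENNReal.ofReal (Ll * ε))) + S.V (S.traj y α t₁) := by
        gcongr ?_ + _
        exact setLIntegral_mono' measurableSet_Ico hpt
    _ = (∫⁻ t in Ico 0 t₁, ENNReal.ofReal (S.l (S.traj x α t) (α t)))
          + ENNReal.ofReal (Ll * ε * t₁) + S.V (S.traj y α t₁) := by
        rw [lintegral_add_right' _ aemeasurable_const, setLIntegral_const, Real.volume_Ico,
          sub_zero, ← ENNReal.ofReal_mul' ht₁]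
    _ ≤ S.cost x α + ENNReal.ofReal (Ll * ε * t₁) + S.V (S.traj y α t₁) := by
        gcongr ?_ + _ + _
        exact lintegral_mono_set hbefore

theorem dist_traj_le (hα : S.Adm α) {x y : Pt n} {τ R L : ℝ} (hL : 0 ≤ L)
    (hLip : ∀ a ∈ S.A, LipschitzOnWith (Real.toNNReal L) (fun x => S.f x a) (closedBall 0 R))
    (hxR : ∀ t ∈ Icc 0 τ, S.traj x α t ∈ closedBall 0 R)
    (hyR : ∀ t ∈ Icc 0 τ, S.traj y α t ∈ closedBall 0 R) :
    ∀ t ∈ Icc 0 τ, dist (S.traj y α t) (S.traj x α t) ≤ dist y x * Real.exp (L * t) := by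
  have hcont (z : Pt n) : ContinuousOn (S.traj z α) (Icc 0 τ) :=
    (S.continuousOn_traj hα z).mono fun _ hs => hs.1
  have heq (z : Pt n) (t : ℝ) (ht : t ∈ Icc 0 τ) :
      S.traj z α t = S.traj z α 0 + ∫ s in (0:ℝ)..t, S.f (S.traj z α s) (α s) := by
    rw [S.htraj0]; exact S.htrajODE z α t ht.1
  simpa [dist_eq_norm, S.htraj0] using
    S.norm_sub_le_of_integral_eq hα hL hLip (hcont y) (hcont x) hyR hxR (heq y) (heq x)

theorem exists_radius_shadow (x₀ : Pt n) {τ ε : ℝ} (hτ : 0 ≤ τ) (hε : 0 < ε) :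
    ∃ r > 0, ∀ α, S.Adm α → ∀ x y : Pt n, dist x x₀ ≤ r → dist y x₀ ≤ r →
      ∀ t₁ ∈ Icc 0 τ, ENNReal.ofReal t₁ ≤ S.exitTime x α →
        dist (S.traj y α t₁) (S.traj x α t₁) ≤ ε ∧
          S.V y ≤ S.cost x α + ENNReal.ofReal ε + S.V (S.traj y α t₁) := by
  obtain ⟨M, hM, hMg⟩ := S.hgrowth
  set N := ‖x₀‖ + 1
  set B := N + M * (1 + N) * τ * Real.exp (M * τ)
  obtain ⟨L, hL, hfLip⟩ := S.hfLip B (by positivity)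
  obtain ⟨Ll, hLl, hlLip⟩ := S.hlLip B (by positivity)
  -- the shadowing accuracy `ε'` keeps the running-cost error `Ll * ε' * τ` below `ε`
  set ε' := ε / (Ll * τ + 1)
  have hε' : Ll * ε' * τ ≤ ε := by
    rw [mul_comm Ll, mul_assoc, div_mul_eq_mul_div, mul_div_assoc]
    exact mul_le_of_le_one_right hε.le ((div_le_one (by positivity)).2 (by linarith))
  set r := min 1 (ε' / (2 * Real.exp (L * τ)))
  have hr : r * (2 * Real.exp (L * τ)) ≤ ε' := (le_div_iff₀ (by positivity)).1 (min_le_right _ _)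
  have hr₁ : r ≤ 1 := min_le_left _ _
  refine ⟨r, by positivity, fun α hα x y hx hy t₁ ht₁ hexit => ?_⟩
  have hball (p : Pt n) (hp : dist p x₀ ≤ r) :
      ∀ t ∈ Icc 0 τ, S.traj p α t ∈ closedBall 0 B := by
    intro t ht
    have hpN : ‖p‖ ≤ N := by linarith [norm_le_insert' p x₀, dist_eq_norm p x₀]
    rw [mem_closedBall_zero_iff]
    calc ‖S.traj p α t‖ ≤ ‖p‖ + M * (1 + ‖p‖) * τ * Real.exp (M * τ) :=
          S.norm_traj_le hα hM.le hMg hτ t ht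
      _ ≤ N + M * (1 + N) * τ * Real.exp (M * τ) := by gcongr
  have hclose : ∀ t ∈ Icc 0 τ, dist (S.traj y α t) (S.traj x α t) ≤ ε' := fun t ht =>
    calc dist (S.traj y α t) (S.traj x α t) ≤ dist y x * Real.exp (L * t) :=
          S.dist_traj_le hα hL.le hfLip (hball x hx) (hball y hy) t ht
      _ ≤ (2 * r) * Real.exp (L * τ) := by
          gcongr
          · linarith [dist_triangle_right y x x₀]
          · exact ht.2
      _ ≤ ε' := by linarith
  have hsub : Ico 0 t₁ ⊆ Icc 0 τ := Ico_subset_Icc_self.trans (Icc_subset_Icc_right ht₁.2)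
  refine ⟨(hclose t₁ ht₁).trans (div_le_self hε.le (by nlinarith)), ?_⟩
  calc S.V y ≤ S.cost x α + ENNReal.ofReal (Ll * ε' * t₁) + S.V (S.traj y α t₁) :=
        S.V_le_cost_add_of_shadow hα hLl.le ht₁.1 hexit hlLip
          (fun t ht => hball x hx t (hsub ht)) (fun t ht => hball y hy t (hsub ht))
          (fun t ht => hclose t (hsub ht))
    _ ≤ S.cost x α + ENNReal.ofReal ε + S.V (S.traj y α t₁) := by
        gcongr
        exact le_trans (by gcongr; exact ht₁.2) hε'

def VanishesNearTarget : Prop :=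
  ∀ η > (0:ℝ), ∃ δ > (0:ℝ), ∀ x ∉ S.T, infDist x S.T < δ → S.V x ≤ ENNReal.ofReal η

def TurnpikeCondition : Prop :=
  ∀ R > (0:ℝ), ∀ η > (0:ℝ), ∀ δ > (0:ℝ), ∃ Tfn : ℝ → ℝ, Monotone Tfn ∧
    ∀ x ∉ S.T, S.V x < ⊤ → δ ≤ infDist x S.T → infDist x S.T ≤ R →
      ∃ α, S.AsympAdm x α ∧ S.cost x α ≤ S.V x + ENNReal.ofReal η ∧
        ∃ t ∈ Set.Icc (0:ℝ) (Tfn (S.V x).toReal), S.traj x α t ∈ Metric.cthickening δ S.T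

theorem exists_V_le_of_infDist_lt (hcont : S.VanishesNearTarget) {η : ℝ} (hη : 0 < η) :
    ∃ δ > 0, ∀ z, infDist z S.T < δ → S.V z ≤ ENNReal.ofReal η := by
  obtain ⟨δ, hδ, h⟩ := hcont η hη
  refine ⟨δ, hδ, fun z hz => ?_⟩
  by_cases hzT : z ∈ S.T
  · simp [S.V_eq_zero_of_mem hzT]
  · exact h z hzT hz

theorem V_eq_zero_of_target_eq_empty (hcont : S.VanishesNearTarget) (hT : S.T = ∅)
    (z : Pt n) : S.V z = 0 := by
  refine nonpos_iff_eq_zero.1 (ENNReal.le_of_forall_pos_le_add fun η hη _ => ?_)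
  obtain ⟨δ, hδ, h⟩ := S.exists_V_le_of_infDist_lt hcont hη
  simpa using h z (by simpa [hT] using hδ)

theorem exists_radius_V_le_V_add (hcont : S.VanishesNearTarget) (hTPC : S.TurnpikeCondition)
    {x₀ : Pt n} (hx₀ : x₀ ∉ S.T) {η K : ℝ} (hη : 0 < η) (hK : 0 ≤ K) :
    ∃ r > 0, ∀ x y : Pt n, dist x x₀ ≤ r → dist y x₀ ≤ r →
      S.V x ≤ ENNReal.ofReal K → S.V y ≤ S.V x + ENNReal.ofReal η := by
  rcases S.T.eq_empty_or_nonempty with hT | hT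
  · exact ⟨1, one_pos, fun _ y _ _ _ => by simp [S.V_eq_zero_of_target_eq_empty hcont hT y]⟩
  have hd₀ : 0 < infDist x₀ S.T := (S.hTclosed.notMem_iff_infDist_pos hT).1 hx₀
  obtain ⟨δ₀, hδ₀, hVnear⟩ := S.exists_V_le_of_infDist_lt hcont (by positivity : 0 < η / 4)
  set δ := min (δ₀ / 2) (infDist x₀ S.T / 2)
  obtain ⟨Tfn, hTmono, hTfn⟩ :=
    hTPC (infDist x₀ S.T + 1) (by positivity) (η / 4) (by positivity) δ (by positivity)
  obtain ⟨r, hr, hshadow⟩ := S.exists_radius_shadow x₀ (le_max_right (Tfn K) 0)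
    (by positivity : 0 < min (η / 4) (δ₀ / 4))
  refine ⟨min r (min 1 (infDist x₀ S.T / 2)), by positivity, fun x y hx hy hVx => ?_⟩
  have hx₁ : dist x x₀ ≤ 1 := hx.trans ((min_le_right _ _).trans (min_le_left _ _))
  have hx₂ : dist x x₀ ≤ infDist x₀ S.T / 2 :=
    hx.trans ((min_le_right _ _).trans (min_le_right _ _))
  have hδx : δ ≤ infDist x S.T := by
    linarith [infDist_le_infDist_add_dist (x := x₀) (y := x) (s := S.T), dist_comm x x₀,
      min_le_right (δ₀ / 2) (infDist x₀ S.T / 2)]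
  have hxR : infDist x S.T ≤ infDist x₀ S.T + 1 := by
    linarith [infDist_le_infDist_add_dist (x := x) (y := x₀) (s := S.T)]
  have hxT : x ∉ S.T := fun h => by
    rw [infDist_zero_of_mem h] at hδx
    exact hδx.not_gt (by positivity)
  obtain ⟨α, hα, hαcost, ts, hts, htsδ⟩ :=
    hTfn x hxT (hVx.trans_lt ENNReal.ofReal_lt_top) hδx hxR
  have htsτ : ts ≤ max (Tfn K) 0 :=
    hts.2.trans ((hTmono (ENNReal.toReal_le_of_le_ofReal hK hVx)).trans (le_max_left _ _))
  obtain ⟨t₁, ht₁, ht₁δ, hbefore⟩ :=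
    exists_first_mem_of_isClosed (S.continuousOn_traj hα.1 x) isClosed_cthickening hts.1 htsδ
  have hexit : ENNReal.ofReal t₁ ≤ S.exitTime x α := le_iInf fun ⟨s, hs, hsT⟩ =>
    ENNReal.ofReal_le_ofReal <| not_lt.1 fun hst =>
      hbefore s ⟨hs, hst⟩ (self_subset_cthickening _ hsT)
  obtain ⟨hdist, hV⟩ := hshadow α hα.1 x y (hx.trans (min_le_left _ _))
    (hy.trans (min_le_left _ _)) t₁ ⟨ht₁.1, ht₁.2.trans htsτ⟩ hexit
  have hz : S.V (S.traj y α t₁) ≤ ENNReal.ofReal (η / 4) := by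
    refine hVnear _ ?_
    have h₁ : infDist (S.traj x α t₁) S.T ≤ δ :=
      ENNReal.toReal_le_of_le_ofReal (by positivity) (mem_cthickening_iff.1 ht₁δ)
    linarith [infDist_le_infDist_add_dist (x := S.traj y α t₁) (y := S.traj x α t₁) (s := S.T),
      min_le_left (δ₀ / 2) (infDist x₀ S.T / 2), min_le_right (η / 4) (δ₀ / 4)]
  calc S.V y ≤ S.cost x α + ENNReal.ofReal (min (η / 4) (δ₀ / 4)) + S.V (S.traj y α t₁) := hV
    _ ≤ S.V x + ENNReal.ofReal (η / 4) + ENNReal.ofReal (η / 4) + ENNReal.ofReal (η / 4) := by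
        gcongr
        exact min_le_left _ _
    _ ≤ S.V x + ENNReal.ofReal η := by
        rw [add_assoc, add_assoc, ← ENNReal.ofReal_add (by positivity) (by positivity),
          ← ENNReal.ofReal_add (by positivity) (by positivity)]
        gcongr
        linarith

theorem eventually_V_le_add_and_le_add (hcont : S.VanishesNearTarget)
    (hTPC : S.TurnpikeCondition) {p : Pt n} (hpT : p ∉ S.T) (hp : S.V p ≠ ⊤) {η : ℝ}
    (hη : 0 < η) :
    ∀ᶠ q in 𝓝 p, S.V q ≤ S.V p + ENNReal.ofReal η ∧ S.V p ≤ S.V q + ENNReal.ofReal η := by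
  have hK : S.V p + ENNReal.ofReal η = ENNReal.ofReal ((S.V p).toReal + η) := by
    rw [ENNReal.ofReal_add ENNReal.toReal_nonneg hη.le, ENNReal.ofReal_toReal hp]
  obtain ⟨r, hr, h⟩ := S.exists_radius_V_le_V_add hcont hTPC hpT hη
    (add_nonneg ENNReal.toReal_nonneg hη.le)
  have hpr : dist p p ≤ r := (dist_self p).trans_le hr.le
  filter_upwards [closedBall_mem_nhds p hr] with q hq
  have hqp := h p q hpr hq (hK ▸ le_self_add)
  exact ⟨hqp, h q p hq hpr (hqp.trans hK.le)⟩

end ExitSetting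

/-- If `𝒱` is continuous on `∂𝒯` and the turnpike condition (TPC) holds —
for all `R, η, δ > 0` there is an increasing `T : ℝ₊ → ℝ₊` such that every
`x ∈ Dom(𝒱)` with `δ ≤ dist(x,𝒯) ≤ R` admits a nearly optimal asymptotically
admissible control whose trajectory enters `𝒯_δ` within time `T(𝒱(x))` —
then `Dom(𝒱)` is open, `𝒱` is continuous on `Dom(𝒱)`, and `𝒱(x) → +∞` as
`x → x̄` for every `x̄ ∈ ∂ Dom(𝒱)` outside the target. -/
theorem stmt13 {n m : ℕ} (S : ExitSetting n m)
    (hcont : ∀ η > (0:ℝ), ∃ δ > (0:ℝ), ∀ x ∉ S.T,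
      infDist x S.T < δ → S.V x ≤ ENNReal.ofReal η)
    (hTPC : ∀ R > (0:ℝ), ∀ η > (0:ℝ), ∀ δ > (0:ℝ), ∃ Tfn : ℝ → ℝ,
      Monotone Tfn ∧
      ∀ x ∉ S.T, S.V x < ⊤ → δ ≤ infDist x S.T → infDist x S.T ≤ R →
        ∃ α, S.AsympAdm x α ∧ S.cost x α ≤ S.V x + ENNReal.ofReal η ∧
          ∃ t ∈ Set.Icc (0:ℝ) (Tfn (S.V x).toReal),
            S.traj x α t ∈ Metric.cthickening δ S.T) :
    IsOpen {x | x ∉ S.T ∧ S.V x < ⊤} ∧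
    ContinuousOn S.V {x | x ∉ S.T ∧ S.V x < ⊤} ∧
    (∀ x₀ ∈ frontier {x | x ∉ S.T ∧ S.V x < ⊤}, x₀ ∉ S.T →
      Tendsto S.V (nhdsWithin x₀ {x | x ∉ S.T ∧ S.V x < ⊤}) (nhds ⊤)) := by
  have hOpen : IsOpen {x | x ∉ S.T ∧ S.V x < ⊤} := isOpen_iff_mem_nhds.2 fun p hp => by
    filter_upwards [S.hTclosed.isOpen_compl.mem_nhds hp.1,
      S.eventually_V_le_add_and_le_add hcont hTPC hp.1 hp.2.ne one_pos] with q hqT hq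
    exact ⟨hqT, hq.1.trans_lt (ENNReal.add_lt_top.2 ⟨hp.2, ENNReal.ofReal_lt_top⟩)⟩
  refine ⟨hOpen, fun p hp => ?_, fun p hp hpT => ?_⟩
  · refine ContinuousAt.continuousWithinAt ((ENNReal.tendsto_nhds hp.2.ne).2 fun ε hε => ?_)
    obtain ⟨η, -, hη, hηε⟩ := ENNReal.lt_iff_exists_real_btwn.1 hε
    filter_upwards [S.eventually_V_le_add_and_le_add hcont hTPC hp.1 hp.2.ne
      (ENNReal.ofReal_pos.1 hη)] with q hq
    exact ⟨tsub_le_iff_right.2 (hq.2.trans (by gcongr)), hq.1.trans (by gcongr)⟩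
  · refine ENNReal.tendsto_nhds_top fun k => ?_
    by_contra hk
    obtain ⟨r, hr, h⟩ := S.exists_radius_V_le_V_add hcont hTPC hpT one_pos k.cast_nonneg
    obtain ⟨q, hqk, hq⟩ := ((Filter.not_eventually.1 hk).and_eventually
      (mem_nhdsWithin_of_mem_nhds (closedBall_mem_nhds p hr))).exists
    have hVq : S.V q ≤ ENNReal.ofReal k := by simpa using not_lt.1 hqk
    rw [hOpen.frontier_eq] at hp
    exact hp.2 ⟨hpT, (h q p hq (by simpa using hr.le) hVq).trans_lt
      (ENNReal.add_lt_top.2 ⟨hVq.trans_lt ENNReal.ofReal_lt_top, ENNReal.ofReal_lt_top⟩)⟩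
end
end

section
/- For the scalar system $y' = -y\alpha$, $y(0)=x>0$, $\alpha(t)\in[0,1]$, with $l(x,a)=|x|$ and $\rho(x,a)=|a|$: the penalized value function $\mathcal{U}^\rho(x) = \inf\{\int_0^\infty |y_x(t,\alpha)|\,dt : \int_0^\infty \alpha(t)\,dt = +\infty \text{ and } \int_0^\infty |\alpha(t)|\,dt < +\infty\}$ equals $+\infty$ (the admissible set is empty), whereas the unpenalized asymptotic value is $\mathcal{V}(x)=x<+\infty$. Hence $\mathcal{V}<\mathcal{U}^\rho$, exhibiting a Lavrentiev gap. -/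
open MeasureTheory Filter Set
open scoped ENNReal

/-- Lavrentiev gap for the scalar system `y' = -y α`, `y(0) = x > 0`, with
`l(x,a) = |x|` and penalization `ρ(x,a) = |a|`: asymptotic admissibility to the
target `{0}` requires `∫₀^∞ α = +∞`, incompatible with `∫₀^∞ |α| < +∞`, so the
`ρ`-admissible set is empty and `𝒰^ρ(x) = +∞` (an infimum over the empty set),
while the unpenalized asymptotic value is `𝒱(x) = x < +∞`; hence `𝒱 < 𝒰^ρ`. -/
theorem stmt17 (x : ℝ) (hx : 0 < x) :
    {α : ℝ → ℝ | Measurable α ∧ (∀ t, α t ∈ Set.Icc (0:ℝ) 1) ∧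
        (∫⁻ s in Set.Ioi (0:ℝ), ENNReal.ofReal (α s)) = ⊤ ∧
        (∫⁻ s in Set.Ioi (0:ℝ), ENNReal.ofReal (|α s|)) < ⊤} = ∅ ∧
    (⨅ α : {α : ℝ → ℝ // Measurable α ∧ (∀ t, α t ∈ Set.Icc (0:ℝ) 1) ∧
        (∫⁻ s in Set.Ioi (0:ℝ), ENNReal.ofReal (α s)) = ⊤},
      ∫⁻ t in Set.Ioi (0:ℝ),
        ENNReal.ofReal (|x * Real.exp (-(∫ s in (0:ℝ)..t, α.1 s))|))
      = ENNReal.ofReal x ∧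
    (⨅ α : {α : ℝ → ℝ // Measurable α ∧ (∀ t, α t ∈ Set.Icc (0:ℝ) 1) ∧
        (∫⁻ s in Set.Ioi (0:ℝ), ENNReal.ofReal (α s)) = ⊤},
      ∫⁻ t in Set.Ioi (0:ℝ),
        ENNReal.ofReal (|x * Real.exp (-(∫ s in (0:ℝ)..t, α.1 s))|))
      < (⨅ α : {α : ℝ → ℝ // Measurable α ∧ (∀ t, α t ∈ Set.Icc (0:ℝ) 1) ∧
          (∫⁻ s in Set.Ioi (0:ℝ), ENNReal.ofReal (α s)) = ⊤ ∧
          (∫⁻ s in Set.Ioi (0:ℝ), ENNReal.ofReal (|α s|)) < ⊤},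
        ∫⁻ t in Set.Ioi (0:ℝ),
          ENNReal.ofReal (|x * Real.exp (-(∫ s in (0:ℝ)..t, α.1 s))|)) := by
  -- Part 1: the ρ-admissible set is empty
  have h1 : {α : ℝ → ℝ | Measurable α ∧ (∀ t, α t ∈ Set.Icc (0:ℝ) 1) ∧
        (∫⁻ s in Set.Ioi (0:ℝ), ENNReal.ofReal (α s)) = ⊤ ∧
        (∫⁻ s in Set.Ioi (0:ℝ), ENNReal.ofReal (|α s|)) < ⊤} = ∅ := by
    ext α
    simp only [Set.mem_setOf_eq, Set.mem_empty_iff_false, iff_false, not_and]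
    rintro hm hIcc htop
    have habs : (∫⁻ s in Set.Ioi (0:ℝ), ENNReal.ofReal (|α s|))
        = (∫⁻ s in Set.Ioi (0:ℝ), ENNReal.ofReal (α s)) :=
      lintegral_congr fun s => by rw [abs_of_nonneg (hIcc s).1]
    rw [habs, htop]
    exact lt_irrefl ⊤
  -- base computation : ∫₀^∞ x e^{-t} = x
  have hbase : (∫⁻ t in Set.Ioi (0:ℝ), ENNReal.ofReal (x * Real.exp (-t)))
      = ENNReal.ofReal x := by
    rw [← ofReal_integral_eq_lintegral_ofReal]
    · rw [integral_const_mul, integral_exp_neg_Ioi_zero, mul_one]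
    · simpa using (exp_neg_integrableOn_Ioi 0 one_pos).const_mul x
    · filter_upwards with t using mul_nonneg hx.le (Real.exp_nonneg _)
  -- Part 2: the unpenalized value equals x
  have h2 : (⨅ α : {α : ℝ → ℝ // Measurable α ∧ (∀ t, α t ∈ Set.Icc (0:ℝ) 1) ∧
        (∫⁻ s in Set.Ioi (0:ℝ), ENNReal.ofReal (α s)) = ⊤},
      ∫⁻ t in Set.Ioi (0:ℝ),
        ENNReal.ofReal (|x * Real.exp (-(∫ s in (0:ℝ)..t, α.1 s))|))
      = ENNReal.ofReal x := by
    apply le_antisymm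
    · -- upper bound via the constant control α ≡ 1
      refine le_trans (iInf_le _ ⟨(fun _ => 1), measurable_const,
        fun t => ⟨zero_le_one, le_refl 1⟩, by simp [Real.volume_Ioi]⟩) ?_
      have : ∀ t : ℝ, |x * Real.exp (-(∫ s in (0:ℝ)..t, (1:ℝ)))|
          = x * Real.exp (-t) := by
        intro t
        rw [intervalIntegral.integral_const, smul_eq_mul, mul_one, sub_zero,
          abs_of_nonneg
          (mul_nonneg hx.le (Real.exp_nonneg _))]
      rw [lintegral_congr fun t => by rw [this t]]
      exact hbase.le
    · -- lower bound: since α ≤ 1, ∫₀^t α ≤ t, so x e^{-∫α} ≥ x e^{-t}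
      refine le_iInf fun ⟨α, hm, hIcc, _⟩ => ?_
      rw [← hbase]
      refine setLIntegral_mono' measurableSet_Ioi fun t ht => ?_
      have hInt : IntervalIntegrable α volume 0 t := by
        rw [intervalIntegrable_iff]
        apply Measure.integrableOn_of_bounded (M := 1)
          measure_Ioc_lt_top.ne hm.aestronglyMeasurable
        filter_upwards with s
        rw [Real.norm_eq_abs, abs_le]
        exact ⟨le_trans (by norm_num) (hIcc s).1, (hIcc s).2⟩
      have hle : (∫ s in (0:ℝ)..t, α s) ≤ t := by
        calc (∫ s in (0:ℝ)..t, α s) ≤ ∫ s in (0:ℝ)..t, (1:ℝ) :=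
              intervalIntegral.integral_mono_on (le_of_lt ht) hInt
                intervalIntegrable_const (fun s _ => (hIcc s).2)
          _ = t := by simp
      apply ENNReal.ofReal_le_ofReal
      rw [abs_of_nonneg (mul_nonneg hx.le (Real.exp_nonneg _))]
      exact mul_le_mul_of_nonneg_left
        (Real.exp_le_exp.mpr (neg_le_neg hle)) hx.le
  refine ⟨h1, h2, ?_⟩
  -- Part 3: strict inequality (infimum over the empty set is ⊤)
  have hempty : IsEmpty {α : ℝ → ℝ // Measurable α ∧ (∀ t, α t ∈ Set.Icc (0:ℝ) 1) ∧
      (∫⁻ s in Set.Ioi (0:ℝ), ENNReal.ofReal (α s)) = ⊤ ∧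
      (∫⁻ s in Set.Ioi (0:ℝ), ENNReal.ofReal (|α s|)) < ⊤} := by
    constructor
    rintro ⟨α, hα⟩
    exact (eq_empty_iff_forall_notMem.mp h1) α hα
  rw [h2, iInf_of_empty]
  exact ENNReal.ofReal_lt_top
end
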